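/- arXiv:1709.03701 — 9 statements merged into one kernel-verified Lean document; each statement's English description precedes it below -/
import Mathlib

section
/- Let k ≥ 1 and let B be a finite family of closed real intervals [a,b] with a < b such that all endpoints of intervals in B are pairwise distinct, and let B = B_1 ∪ ... ∪ B_k be a partition where each B_j is proper. Let D be the set of all endpoints of intervals of B, and define a binary relation ≤^P on the disjoint union P = D ⊔ B by: (i) for d_1, d_2 ∈ D, d_1 ≤^P d_2 iff d_1 ≤ d_2 as real numbers; (ii) for intervals t_1 = [a_1,b_1], t_2 = [a_2,b_2] ∈ B, t_1 ≤^P t_2 iff t_1 = t_2, or b_1 < a_2, or t_1 and t_2 lie in the same part B_j and a_1 < a_2; (iii) for t = [a,b] ∈ B and d ∈ D, t ≤^P d iff b ≤ d, and d ≤^P t iff d ≤ a. Then ≤^P is a partial order on P. -/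
/-- The order relation `≤^P` on the disjoint union `ℝ ⊕ (ℝ × ℝ)` of endpoints and
intervals, where `f` assigns each interval its part of the partition:
(i) endpoints are ordered as real numbers;
(ii) an interval `t₁ = [a₁,b₁]` is below `t₂ = [a₂,b₂]` iff `t₁ = t₂`, or `b₁ < a₂`, or
    `t₁, t₂` lie in the same part and `a₁ < a₂`;
(iii) `t = [a,b]` is below an endpoint `d` iff `b ≤ d`, and `d` is below `t` iff `d ≤ a`. -/
def relP {k : ℕ} (f : ℝ × ℝ → Fin k) : (ℝ ⊕ ℝ × ℝ) → (ℝ ⊕ ℝ × ℝ) → Prop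
  | .inl d₁, .inl d₂ => d₁ ≤ d₂
  | .inr t₁, .inr t₂ => t₁ = t₂ ∨ t₁.2 < t₂.1 ∨ (f t₁ = f t₂ ∧ t₁.1 < t₂.1)
  | .inr t, .inl d => t.2 ≤ d
  | .inl d, .inr t => d ≤ t.1

/-- The ground set `P = D ⊔ B`: the left summand consists of the endpoints of
intervals of `B`, the right summand of the intervals of `B` themselves. -/
def carrierP (B : Finset (ℝ × ℝ)) : Set (ℝ ⊕ ℝ × ℝ) :=
  {x | Sum.elim (fun d => ∃ p ∈ B, p.1 = d ∨ p.2 = d) (fun t => t ∈ B) x}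

/-! Within a proper part, the left and the right endpoints of intervals are ordered alike, so
every instance of `≤^P` between distinct intervals `s, t` strictly increases the left endpoint
and weakly increases the right one. Transitivity and antisymmetry then reduce to chains of
inequalities between endpoints; the only strictness not supplied by `a < b` — an interval
below an endpoint below another interval — comes from the endpoints being pairwise distinct. -/

theorem snd_le_snd_of_fst_lt_of_proper {k : ℕ} {B : Finset (ℝ × ℝ)} {f : ℝ × ℝ → Fin k}
    (hproper : ∀ p ∈ B, ∀ q ∈ B, f p = f q → Set.Icc p.1 p.2 ⊆ Set.Icc q.1 q.2 → p = q)
    {p q : ℝ × ℝ} (hp : p ∈ B) (hq : q ∈ B) (hf : f p = f q) (hlt : p.1 < q.1) :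
    p.2 ≤ q.2 := by
  by_contra! hgt
  have hqp : q = p := hproper q hq p hp hf.symm (Set.Icc_subset_Icc hlt.le hgt.le)
  exact hlt.ne (congrArg Prod.fst hqp).symm

namespace relP

variable {k : ℕ} {f : ℝ × ℝ → Fin k}

theorem refl (x : ℝ ⊕ ℝ × ℝ) : relP f x x := by
  rcases x with d | t
  · exact le_refl d
  · exact Or.inl rfl

theorem inr_fst_lt {s t : ℝ × ℝ} (h : relP f (.inr s) (.inr t)) (hne : s ≠ t)
    (hs : s.1 < s.2) : s.1 < t.1 := by
  rcases h with rfl | hlt | ⟨-, hlt⟩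
  · exact absurd rfl hne
  · exact hs.trans hlt
  · exact hlt

theorem inr_fst_le {s t : ℝ × ℝ} (h : relP f (.inr s) (.inr t)) (hs : s.1 < s.2) :
    s.1 ≤ t.1 := by
  obtain rfl | hne := eq_or_ne s t
  · exact le_rfl
  · exact (inr_fst_lt h hne hs).le

theorem inr_snd_le {s t : ℝ × ℝ} (h : relP f (.inr s) (.inr t)) (ht : t.1 < t.2)
    (hmono : f s = f t → s.1 < t.1 → s.2 ≤ t.2) : s.2 ≤ t.2 := by
  rcases h with rfl | hlt | ⟨hf, hlt⟩
  · exact le_rfl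
  · exact (hlt.trans ht).le
  · exact hmono hf hlt

theorem inr_trans {r s t : ℝ × ℝ} (hrs : relP f (.inr r) (.inr s))
    (hst : relP f (.inr s) (.inr t)) (hs : s.1 < s.2)
    (hmono : f r = f s → r.1 < s.1 → r.2 ≤ s.2) : relP f (.inr r) (.inr t) := by
  rcases hrs with rfl | hlt | ⟨hf, hlt⟩
  · exact hst
  · exact Or.inr (Or.inl (hlt.trans_le (inr_fst_le hst hs)))
  · rcases hst with rfl | hlt' | ⟨hf', hlt'⟩
    · exact Or.inr (Or.inr ⟨hf, hlt⟩)
    · exact Or.inr (Or.inl ((hmono hf hlt).trans_lt hlt'))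
    · exact Or.inr (Or.inr ⟨hf.trans hf', hlt.trans hlt'⟩)

theorem inr_antisymm {s t : ℝ × ℝ} (hst : relP f (.inr s) (.inr t))
    (hts : relP f (.inr t) (.inr s)) (hs : s.1 < s.2) (ht : t.1 < t.2) : s = t := by
  by_contra hne
  exact (inr_fst_lt hst hne hs).not_ge (inr_fst_le hts ht)

variable {B : Finset (ℝ × ℝ)}

theorem trans (hB : ∀ p ∈ B, p.1 < p.2)
    (hdist : ∀ p ∈ B, ∀ q ∈ B, p ≠ q → p.1 ≠ q.1 ∧ p.1 ≠ q.2 ∧ p.2 ≠ q.1 ∧ p.2 ≠ q.2)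
    (hproper : ∀ p ∈ B, ∀ q ∈ B, f p = f q → Set.Icc p.1 p.2 ⊆ Set.Icc q.1 q.2 → p = q)
    {x y z : ℝ ⊕ ℝ × ℝ} (hx : x ∈ carrierP B) (hy : y ∈ carrierP B) (hz : z ∈ carrierP B)
    (hxy : relP f x y) (hyz : relP f y z) : relP f x z := by
  rcases x with d₁ | t₁ <;> rcases y with d₂ | t₂ <;> rcases z with d₃ | t₃
  · exact le_trans hxy hyz
  · exact le_trans hxy hyz
  · exact le_trans hxy ((hB t₂ hy).le.trans hyz)
  · exact le_trans hxy (inr_fst_le hyz (hB t₂ hy))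
  · exact le_trans hxy hyz
  · have hle : t₁.2 ≤ t₃.1 := le_trans hxy hyz
    have hne : t₁ ≠ t₃ := by
      rintro rfl
      exact (hB t₁ hx).not_ge hle
    exact Or.inr (Or.inl (hle.lt_of_ne (hdist t₁ hx t₃ hz hne).2.2.1))
  · exact (inr_snd_le hxy (hB t₂ hy)
      (snd_le_snd_of_fst_lt_of_proper hproper hx hy)).trans hyz
  · exact inr_trans hxy hyz (hB t₂ hy) (snd_le_snd_of_fst_lt_of_proper hproper hx hy)

theorem antisymm (hB : ∀ p ∈ B, p.1 < p.2) {x y : ℝ ⊕ ℝ × ℝ} (hx : x ∈ carrierP B)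
    (hy : y ∈ carrierP B) (hxy : relP f x y) (hyx : relP f y x) : x = y := by
  rcases x with d₁ | t₁ <;> rcases y with d₂ | t₂
  · exact congrArg Sum.inl (le_antisymm hxy hyx)
  · exact absurd ((hB t₂ hy).trans_le hyx) (not_lt.mpr hxy)
  · exact absurd ((hB t₁ hx).trans_le hxy) (not_lt.mpr hyx)
  · exact congrArg Sum.inr (inr_antisymm hxy hyx (hB t₁ hx) (hB t₂ hy))

end relP

theorem relP_isPartialOrder_general
    (k : ℕ) (B : Finset (ℝ × ℝ))
    (hB : ∀ p ∈ B, p.1 < p.2)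
    (hdist : ∀ p ∈ B, ∀ q ∈ B, p ≠ q →
      p.1 ≠ q.1 ∧ p.1 ≠ q.2 ∧ p.2 ≠ q.1 ∧ p.2 ≠ q.2)
    (f : ℝ × ℝ → Fin k)
    (hproper : ∀ p ∈ B, ∀ q ∈ B, f p = f q →
      Set.Icc p.1 p.2 ⊆ Set.Icc q.1 q.2 → p = q) :
    (∀ x ∈ carrierP B, relP f x x) ∧
    (∀ x ∈ carrierP B, ∀ y ∈ carrierP B, ∀ z ∈ carrierP B,
        relP f x y → relP f y z → relP f x z) ∧
    (∀ x ∈ carrierP B, ∀ y ∈ carrierP B, relP f x y → relP f y x → x = y) :=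
  ⟨fun x _ => relP.refl x,
    fun _ hx _ hy _ hz => relP.trans hB hdist hproper hx hy hz,
    fun _ hx _ hy => relP.antisymm hB hx hy⟩

/-- For a finite family `B` of closed intervals `[a,b]`, `a < b`, with
pairwise distinct endpoints, partitioned by `f` into `k` proper parts, the relation
`≤^P` is a partial order (reflexive, transitive, antisymmetric) on `P = D ⊔ B`. -/
theorem relP_isPartialOrder
    (k : ℕ) (hk : 1 ≤ k) (B : Finset (ℝ × ℝ))
    (hB : ∀ p ∈ B, p.1 < p.2)
    (hdist : ∀ p ∈ B, ∀ q ∈ B, p ≠ q →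
      p.1 ≠ q.1 ∧ p.1 ≠ q.2 ∧ p.2 ≠ q.1 ∧ p.2 ≠ q.2)
    (f : ℝ × ℝ → Fin k)
    (hproper : ∀ p ∈ B, ∀ q ∈ B, f p = f q →
      Set.Icc p.1 p.2 ⊆ Set.Icc q.1 q.2 → p = q) :
    (∀ x ∈ carrierP B, relP f x x) ∧
    (∀ x ∈ carrierP B, ∀ y ∈ carrierP B, ∀ z ∈ carrierP B,
        relP f x y → relP f y z → relP f x z) ∧
    (∀ x ∈ carrierP B, ∀ y ∈ carrierP B, relP f x y → relP f y x → x = y) :=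
  relP_isPartialOrder_general k B hB hdist f hproper
end

section
/- Let k ≥ 1 and let B be a finite family of closed real intervals with pairwise distinct endpoints, partitioned as B = B_1 ∪ ... ∪ B_k with each B_j proper, let D be the set of all endpoints, and let ≤^P be the partial order on P = D ⊔ B defined by: (i) for d_1, d_2 ∈ D, d_1 ≤^P d_2 iff d_1 ≤ d_2; (ii) for t_1 = [a_1,b_1], t_2 = [a_2,b_2] ∈ B, t_1 ≤^P t_2 iff t_1 = t_2, or b_1 < a_2, or t_1, t_2 lie in the same part B_j and a_1 < a_2; (iii) for t = [a,b] ∈ B and d ∈ D, t ≤^P d iff b ≤ d, and d ≤^P t iff d ≤ a. Then D and each B_j are chains of (P, ≤^P); consequently every antichain of (P, ≤^P) has at most k+1 elements (the poset has width at most k+1). -/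
open Finset

theorem Finset.card_le_of_comparable_of_label_eq {α β : Type*} [Fintype β]
    {r : α → α → Prop} (label : α → β) (A : Finset α)
    (hcomp : ∀ x ∈ A, ∀ y ∈ A, label x = label y → r x y ∨ r y x)
    (hanti : ∀ x ∈ A, ∀ y ∈ A, x ≠ y → ¬ r x y ∧ ¬ r y x) :
    #A ≤ Fintype.card β := by
  have hinj : Set.InjOn label A := fun x hx y hy hxy => by
    by_contra hne
    obtain ⟨hxy', hyx'⟩ := hanti x hx y hy hne
    exact (hcomp x hx y hy hxy).elim hxy' hyx'
  simpa using card_le_card_of_injOn label (fun _ _ => mem_univ _) hinj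

section relP

variable {k : ℕ} (f : ℝ × ℝ → Fin k)

def chainLabel : ℝ ⊕ ℝ × ℝ → Option (Fin k) :=
  Sum.elim (fun _ => none) (fun t => some (f t))

theorem relP_inl_total (d₁ d₂ : ℝ) :
    relP f (.inl d₁) (.inl d₂) ∨ relP f (.inl d₂) (.inl d₁) :=
  le_total d₁ d₂

variable {f}

theorem relP_inr_total {s : Set (ℝ × ℝ)} (hs : s.InjOn Prod.fst) {t₁ t₂ : ℝ × ℝ}
    (h₁ : t₁ ∈ s) (h₂ : t₂ ∈ s) (hf : f t₁ = f t₂) :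
    relP f (.inr t₁) (.inr t₂) ∨ relP f (.inr t₂) (.inr t₁) := by
  by_cases heq : t₁ = t₂
  · exact .inl (.inl heq)
  rcases lt_or_gt_of_ne (hs.ne h₁ h₂ heq) with hlt | hgt
  · exact .inl (.inr (.inr ⟨hf, hlt⟩))
  · exact .inr (.inr (.inr ⟨hf.symm, hgt⟩))

theorem relP_total_of_chainLabel_eq {B : Finset (ℝ × ℝ)}
    (hfst : Set.InjOn Prod.fst (B : Set (ℝ × ℝ))) {x y : ℝ ⊕ ℝ × ℝ} (hx : x ∈ carrierP B) (hy : y ∈ carrierP B)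
    (hxy : chainLabel f x = chainLabel f y) : relP f x y ∨ relP f y x := by
  match x, y with
  | .inl d₁, .inl d₂ => exact relP_inl_total f d₁ d₂
  | .inr t₁, .inr t₂ => exact relP_inr_total hfst hx hy (Option.some.inj hxy)
  | .inl _, .inr _ | .inr _, .inl _ => cases hxy

end relP

theorem relP_chains_and_width_general
    (k : ℕ) (B : Finset (ℝ × ℝ))
    (hdist : ∀ p ∈ B, ∀ q ∈ B, p ≠ q →
      p.1 ≠ q.1 ∧ p.1 ≠ q.2 ∧ p.2 ≠ q.1 ∧ p.2 ≠ q.2)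
    (f : ℝ × ℝ → Fin k) :
    (∀ d₁ d₂ : ℝ, (∃ p ∈ B, p.1 = d₁ ∨ p.2 = d₁) → (∃ p ∈ B, p.1 = d₂ ∨ p.2 = d₂) →
        relP f (.inl d₁) (.inl d₂) ∨ relP f (.inl d₂) (.inl d₁)) ∧
    (∀ j : Fin k, ∀ t₁ ∈ B, ∀ t₂ ∈ B, f t₁ = j → f t₂ = j →
        relP f (.inr t₁) (.inr t₂) ∨ relP f (.inr t₂) (.inr t₁)) ∧
    (∀ A : Finset (ℝ ⊕ ℝ × ℝ), ↑A ⊆ carrierP B →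
        (∀ x ∈ A, ∀ y ∈ A, x ≠ y → ¬ relP f x y ∧ ¬ relP f y x) →
        A.card ≤ k + 1) := by
  have hfst : Set.InjOn Prod.fst (B : Set (ℝ × ℝ)) := fun p hp q hq h =>
    by_contra fun hne => (hdist p hp q hq hne).1 h
  refine ⟨fun d₁ d₂ _ _ => relP_inl_total f d₁ d₂,
    fun j t₁ h₁ t₂ h₂ hj₁ hj₂ => relP_inr_total hfst h₁ h₂ (hj₁.trans hj₂.symm),
    fun A hA hanti => ?_⟩
  simpa using A.card_le_of_comparable_of_label_eq (chainLabel f)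
    (fun x hx y hy => relP_total_of_chainLabel_eq hfst (hA hx) (hA hy)) hanti

/-- In the poset `(P, ≤^P)` built from a `k`-fold proper interval
family `B` with pairwise distinct endpoints, the endpoint set `D` is a chain and each
part `B_j` is a chain; consequently every antichain has at most `k + 1` elements. -/
theorem relP_chains_and_width
    (k : ℕ) (hk : 1 ≤ k) (B : Finset (ℝ × ℝ))
    (hB : ∀ p ∈ B, p.1 < p.2)
    (hdist : ∀ p ∈ B, ∀ q ∈ B, p ≠ q →
      p.1 ≠ q.1 ∧ p.1 ≠ q.2 ∧ p.2 ≠ q.1 ∧ p.2 ≠ q.2)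
    (f : ℝ × ℝ → Fin k)
    (hproper : ∀ p ∈ B, ∀ q ∈ B, f p = f q →
      Set.Icc p.1 p.2 ⊆ Set.Icc q.1 q.2 → p = q) :
    (∀ d₁ d₂ : ℝ, (∃ p ∈ B, p.1 = d₁ ∨ p.2 = d₁) → (∃ p ∈ B, p.1 = d₂ ∨ p.2 = d₂) →
        relP f (.inl d₁) (.inl d₂) ∨ relP f (.inl d₂) (.inl d₁)) ∧
    (∀ j : Fin k, ∀ t₁ ∈ B, ∀ t₂ ∈ B, f t₁ = j → f t₂ = j →
        relP f (.inr t₁) (.inr t₂) ∨ relP f (.inr t₂) (.inr t₁)) ∧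
    (∀ A : Finset (ℝ ⊕ ℝ × ℝ), ↑A ⊆ carrierP B →
        (∀ x ∈ A, ∀ y ∈ A, x ≠ y → ¬ relP f x y ∧ ¬ relP f y x) →
        A.card ≤ k + 1) :=
  relP_chains_and_width_general k B hdist f
end

section
/- Let k ≥ 1 and let B be a finite family of closed real intervals with pairwise distinct endpoints, partitioned as B = B_1 ∪ ... ∪ B_k with each B_j proper, let D be the set of all endpoints, and let ≤^P be the partial order on P = D ⊔ B defined by: (i) for d_1, d_2 ∈ D, d_1 ≤^P d_2 iff d_1 ≤ d_2; (ii) for t_1 = [a_1,b_1], t_2 = [a_2,b_2] ∈ B, t_1 ≤^P t_2 iff t_1 = t_2, or b_1 < a_2, or t_1, t_2 lie in the same part B_j and a_1 < a_2; (iii) for t = [a,b] ∈ B and d ∈ D, t ≤^P d iff b ≤ d, and d ≤^P t iff d ≤ a. Then for all intervals x, y ∈ B: x ∩ y ≠ ∅ if and only if there is no endpoint z ∈ D with (x ≤^P z and z ≤^P y) or (y ≤^P z and z ≤^P x). -/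
section IntervalFamily

variable {α : Type*} [LinearOrder α]

theorem Set.Icc_inter_Icc_nonempty_iff {a b c d : α} (hab : a ≤ b) (hcd : c ≤ d) :
    (Set.Icc a b ∩ Set.Icc c d).Nonempty ↔ c ≤ b ∧ a ≤ d := by
  rw [Set.Icc_inter_Icc, Set.nonempty_Icc, sup_le_iff, le_inf_iff, le_inf_iff]
  tauto

variable {B : Finset (α × α)}

theorem snd_ne_fst_of_mem (hB : ∀ p ∈ B, p.1 < p.2)
    (hdist : ∀ p ∈ B, ∀ q ∈ B, p ≠ q → p.2 ≠ q.1) {x y : α × α} (hx : x ∈ B) (hy : y ∈ B) :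
    x.2 ≠ y.1 := by
  rcases eq_or_ne x y with rfl | hxy
  · exact (hB x hx).ne'
  · exact hdist x hx y hy hxy

theorem exists_endpoint_between_iff (hB : ∀ p ∈ B, p.1 < p.2)
    (hdist : ∀ p ∈ B, ∀ q ∈ B, p ≠ q → p.2 ≠ q.1) {x y : α × α} (hx : x ∈ B) (hy : y ∈ B) :
    (∃ z, (∃ p ∈ B, p.1 = z ∨ p.2 = z) ∧ x.2 ≤ z ∧ z ≤ y.1) ↔ x.2 < y.1 := by
  constructor
  · rintro ⟨z, -, hxz, hzy⟩
    exact (hxz.trans hzy).lt_of_ne (snd_ne_fst_of_mem hB hdist hx hy)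
  · intro hxy
    exact ⟨x.2, ⟨x, hx, .inr rfl⟩, le_rfl, hxy.le⟩

end IntervalFamily

theorem relP_defines_intersection_general
    (k : ℕ) (B : Finset (ℝ × ℝ))
    (hB : ∀ p ∈ B, p.1 < p.2)
    (hdist : ∀ p ∈ B, ∀ q ∈ B, p ≠ q →
      p.1 ≠ q.1 ∧ p.1 ≠ q.2 ∧ p.2 ≠ q.1 ∧ p.2 ≠ q.2)
    (f : ℝ × ℝ → Fin k) :
    ∀ x ∈ B, ∀ y ∈ B,
      (Set.Icc x.1 x.2 ∩ Set.Icc y.1 y.2).Nonempty ↔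
      ¬ ∃ z : ℝ, (∃ p ∈ B, p.1 = z ∨ p.2 = z) ∧
          ((relP f (.inr x) (.inl z) ∧ relP f (.inl z) (.inr y)) ∨
           (relP f (.inr y) (.inl z) ∧ relP f (.inl z) (.inr x))) := by
  intro x hx y hy
  have hdist' : ∀ p ∈ B, ∀ q ∈ B, p ≠ q → p.2 ≠ q.1 :=
    fun p hp q hq hpq => (hdist p hp q hq hpq).2.2.1
  rw [Set.Icc_inter_Icc_nonempty_iff (hB x hx).le (hB y hy).le, ← not_lt, ← not_lt, ← not_or,
    ← exists_endpoint_between_iff hB hdist' hx hy, ← exists_endpoint_between_iff hB hdist' hy hx]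
  simp only [relP, and_or_left, exists_or]

/-- In the poset `(P, ≤^P)` built from a `k`-fold proper interval
family `B` with pairwise distinct endpoints, two intervals `x, y ∈ B` intersect if and
only if there is no endpoint `z ∈ D` lying between them in the order `≤^P`
(the formula `ψ` of Gajarský et al.). -/
theorem relP_defines_intersection
    (k : ℕ) (hk : 1 ≤ k) (B : Finset (ℝ × ℝ))
    (hB : ∀ p ∈ B, p.1 < p.2)
    (hdist : ∀ p ∈ B, ∀ q ∈ B, p ≠ q →
      p.1 ≠ q.1 ∧ p.1 ≠ q.2 ∧ p.2 ≠ q.1 ∧ p.2 ≠ q.2)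
    (f : ℝ × ℝ → Fin k)
    (hproper : ∀ p ∈ B, ∀ q ∈ B, f p = f q →
      Set.Icc p.1 p.2 ⊆ Set.Icc q.1 q.2 → p = q) :
    ∀ x ∈ B, ∀ y ∈ B,
      (Set.Icc x.1 x.2 ∩ Set.Icc y.1 y.2).Nonempty ↔
      ¬ ∃ z : ℝ, (∃ p ∈ B, p.1 = z ∨ p.2 = z) ∧
          ((relP f (.inr x) (.inl z) ∧ relP f (.inl z) (.inr y)) ∨
           (relP f (.inr y) (.inl z) ∧ relP f (.inl z) (.inr x))) :=
  relP_defines_intersection_general k B hB hdist f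
end

section
/- Let k ≥ 1 and let B be a finite family of closed real intervals with pairwise distinct endpoints, partitioned as B = B_1 ∪ ... ∪ B_k with each B_j proper, let D be the set of all endpoints, and let ≤^P be the partial order on P = D ⊔ B defined by: (i) for d_1, d_2 ∈ D, d_1 ≤^P d_2 iff d_1 ≤ d_2; (ii) for t_1 = [a_1,b_1], t_2 = [a_2,b_2] ∈ B, t_1 ≤^P t_2 iff t_1 = t_2, or b_1 < a_2, or t_1, t_2 lie in the same part B_j and a_1 < a_2; (iii) for t = [a,b] ∈ B and d ∈ D, t ≤^P d iff b ≤ d, and d ≤^P t iff d ≤ a. Then for all intervals x, y ∈ B: x ⊆ y if and only if for every endpoint z ∈ D, (z ≤^P y implies z ≤^P x) and (y ≤^P z implies x ≤^P z). -/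
theorem Set.Icc_subset_Icc_iff_forall_of_mem {α : Type*} [Preorder α] {a b c d : α}
    {S : Set α} (hab : a ≤ b) (hc : c ∈ S) (hd : d ∈ S) :
    Set.Icc a b ⊆ Set.Icc c d ↔ ∀ z ∈ S, (z ≤ c → z ≤ a) ∧ (d ≤ z → b ≤ z) := by
  constructor
  · intro hsub z _
    obtain ⟨hca, hbd⟩ := (Set.Icc_subset_Icc_iff hab).mp hsub
    exact ⟨fun hz => hz.trans hca, fun hz => hbd.trans hz⟩
  · intro h
    exact Set.Icc_subset_Icc ((h c hc).1 le_rfl) ((h d hd).2 le_rfl)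

theorem relP_defines_containment_general
    (k : ℕ) (B : Finset (ℝ × ℝ))
    (hB : ∀ p ∈ B, p.1 < p.2)
    (f : ℝ × ℝ → Fin k) :
    ∀ x ∈ B, ∀ y ∈ B,
      Set.Icc x.1 x.2 ⊆ Set.Icc y.1 y.2 ↔
      ∀ z : ℝ, (∃ p ∈ B, p.1 = z ∨ p.2 = z) →
        (relP f (.inl z) (.inr y) → relP f (.inl z) (.inr x)) ∧
        (relP f (.inr y) (.inl z) → relP f (.inr x) (.inl z)) := by
  intro x hx y hy
  exact Set.Icc_subset_Icc_iff_forall_of_mem (S := {z | ∃ p ∈ B, p.1 = z ∨ p.2 = z})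
    (hB x hx).le ⟨y, hy, .inl rfl⟩ ⟨y, hy, .inr rfl⟩

/-- In the poset `(P, ≤^P)` built from a `k`-fold proper interval
family `B` with pairwise distinct endpoints, an interval `x ∈ B` is contained in an
interval `y ∈ B` if and only if every endpoint `z ∈ D` below `y` is below `x` and every
endpoint `z ∈ D` above `y` is above `x` (the formula `ϑ` of Gajarský et al.). -/
theorem relP_defines_containment
    (k : ℕ) (hk : 1 ≤ k) (B : Finset (ℝ × ℝ))
    (hB : ∀ p ∈ B, p.1 < p.2)
    (hdist : ∀ p ∈ B, ∀ q ∈ B, p ≠ q →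
      p.1 ≠ q.1 ∧ p.1 ≠ q.2 ∧ p.2 ≠ q.1 ∧ p.2 ≠ q.2)
    (f : ℝ × ℝ → Fin k)
    (hproper : ∀ p ∈ B, ∀ q ∈ B, f p = f q →
      Set.Icc p.1 p.2 ⊆ Set.Icc q.1 q.2 → p = q) :
    ∀ x ∈ B, ∀ y ∈ B,
      Set.Icc x.1 x.2 ⊆ Set.Icc y.1 y.2 ↔
      ∀ z : ℝ, (∃ p ∈ B, p.1 = z ∨ p.2 = z) →
        (relP f (.inl z) (.inr y) → relP f (.inl z) (.inr x)) ∧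
        (relP f (.inr y) (.inl z) → relP f (.inr x) (.inl z)) :=
  relP_defines_containment_general k B hB f
end

section
/- Let k ≥ 1 and let G be a simple graph whose vertex set V is partitioned into sets V_1, V_2, ..., V_r, each of size m, with m > 6kr. Assume that V_i is gradually connected with V_{i+1} for i = 1, ..., r-1, and that there exists a set I ⊆ {1, ..., r-1} with |I| = 2k such that for every transversal X of the set system {V_i : i ∈ I} and every transversal Y of {V_{i+1} : i ∈ I}, the set X is gradually connected to Y. Then for every vertex subset W ⊆ V with rm/3 ≤ |W| ≤ 2rm/3, there exist k vertices in W whose neighbourhoods in V \ W are pairwise distinct (i.e., k vertices u_1, ..., u_k ∈ W such that the sets {v ∈ V \ W : v adjacent to u_s}, s = 1, ..., k, are pairwise distinct). -/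
/-- `X` is gradually connected with `Y` in `G`: there are orderings
`X = {x 0, …, x (m-1)}` and `Y = {y 0, …, y (m-1)}` (where `m = |X| = |Y|`) such that
for all `i < j`, `x j` is adjacent to `y i` while `x i` is not adjacent to `y j`. -/
def GraduallyConnected {V : Type*} (G : SimpleGraph V) (X Y : Finset V) : Prop :=
  X.card = Y.card ∧
  ∃ x y : Fin X.card → V,
    Function.Injective x ∧ Function.Injective y ∧
    Set.range x = ↑X ∧ Set.range y = ↑Y ∧
    ∀ i j : Fin X.card, i < j → G.Adj (x j) (y i) ∧ ¬ G.Adj (x i) (y j)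

/-- `Z` is a transversal of the set system `{Vp i : i ∈ I}`: it consists of `|I|`
distinct elements, one from each `Vp i`, `i ∈ I`. -/
def IsTransversal {V : Type*} [DecidableEq V]
    (Vp : ℕ → Finset V) (I : Finset ℕ) (Z : Finset V) : Prop :=
  ∃ g : ℕ → V, (∀ i ∈ I, g i ∈ Vp i) ∧ Set.InjOn g ↑I ∧ Z = I.image g

/-!
Write `w i = |Vp i ∩ W|`. If for some `i` one of `|Vp i ∩ W| + |Vp (i+1) \ W|` and
`|Vp i \ W| + |Vp (i+1) ∩ W|` is at least `m + 2k`, then the orderings `x`, `y` witnessing that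
`Vp i` is gradually connected with `Vp (i+1)` (reversed, in the second case) share `2k` positions
`c 0 < … < c (2k-1)` with `x (c j) ∈ W` and `y (c j) ∉ W`. The vertex `y (c (2s+1))` is adjacent
to `x (c (2t))` for `t > s` but not to `x (c (2s))`, so the vertices `x (c (2s))` have pairwise
distinct neighbourhoods outside `W`.

Otherwise `w` changes by less than `2k` per step, hence by less than `2kr < m/3` overall. As the
average of `w` lies in `[m/3, 2m/3]`, every part meets both `W` and its complement, so there are
transversals `X ⊆ W` of `{Vp i : i ∈ I}` and `Y` of `{Vp (i+1) : i ∈ I}` disjoint from `W`; being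
gradually connected, they form a pair of the first kind with all `2k` positions usable.
-/

open Finset

theorem abs_sub_le_mul_of_abs_succ_sub_le {f : ℕ → ℤ} {d : ℤ} {a b : ℕ}
    (h : ∀ i ∈ Ico a b, |f (i + 1) - f i| ≤ d) {i j : ℕ} (hai : a ≤ i) (hij : i ≤ j)
    (hjb : j ≤ b) : |f j - f i| ≤ d * (j - i) := by
  induction j, hij using Nat.le_induction with
  | base => simp
  | succ j hij ih =>
    calc |f (j + 1) - f i| ≤ |f (j + 1) - f j| + |f j - f i| := abs_sub_le _ _ _
      _ ≤ d + d * (j - i) := add_le_add (h j (mem_Ico.2 ⟨by omega, by omega⟩)) (ih (by omega))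
      _ = d * ((j + 1 : ℕ) - i) := by push_cast; ring

theorem forall_pos_lt_of_abs_succ_sub_le {w : ℕ → ℕ} {d r m : ℕ}
    (hstep : ∀ i ∈ Ico 1 r, |(w (i + 1) : ℤ) - w i| ≤ d)
    (hsum₁ : r * m ≤ 3 * ∑ i ∈ Icc 1 r, w i) (hsum₂ : 3 * ∑ i ∈ Icc 1 r, w i ≤ 2 * (r * m))
    (hm : 3 * d * r < m) : ∀ i ∈ Icc 1 r, 0 < w i ∧ w i < m := by
  have hdrift : ∀ i ∈ Icc 1 r, ∀ j ∈ Icc 1 r, (w i : ℤ) ≤ w j + d * r := by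
    intro i hi j hj
    rw [mem_Icc] at hi hj
    have habs := @abs_sub_le_mul_of_abs_succ_sub_le (fun i => (w i : ℤ)) d 1 r hstep
    rcases le_total i j with hij | hji
    · have := abs_le.mp (habs hi.1 hij hj.2)
      nlinarith
    · have := abs_le.mp (habs hj.1 hji hi.2)
      nlinarith
  intro i hi
  have hne : (Icc 1 r).Nonempty := ⟨i, hi⟩
  have hsum_const (c : ℕ) : ∑ _ ∈ Icc 1 r, c = r * c := by simp
  obtain ⟨i₀, hi₀, hheavy⟩ : ∃ i₀ ∈ Icc 1 r, m ≤ 3 * w i₀ :=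
    exists_le_of_sum_le hne (by rwa [hsum_const, ← mul_sum])
  obtain ⟨j₀, hj₀, hlight⟩ : ∃ j₀ ∈ Icc 1 r, 3 * w j₀ ≤ 2 * m :=
    exists_le_of_sum_le hne (by rwa [hsum_const, ← mul_sum, mul_left_comm])
  have h₁ := hdrift i₀ hi₀ i hi
  have h₂ := hdrift i hi j₀ hj₀
  constructor <;> zify at * <;> nlinarith

def HasDistinctOutsideNeighbourhoods {V : Type*} (G : SimpleGraph V) (W : Finset V) (k : ℕ) :
    Prop :=
  ∃ u : Fin k → V, Function.Injective u ∧ (∀ s, u s ∈ W) ∧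
    ∀ s t : Fin k, s ≠ t →
      {v : V | v ∉ W ∧ G.Adj v (u s)} ≠ {v : V | v ∉ W ∧ G.Adj v (u t)}

section

variable {V : Type*} {G : SimpleGraph V} {W : Finset V} {k : ℕ}

theorem hasDistinctOutsideNeighbourhoods_of_separated (u : Fin k → V) (hu : ∀ s, u s ∈ W)
    (hsep : ∀ s t, s < t → ∃ v ∉ W, G.Adj v (u t) ∧ ¬ G.Adj v (u s)) :
    HasDistinctOutsideNeighbourhoods G W k := by
  have hne : ∀ s t, s < t →
      {v : V | v ∉ W ∧ G.Adj v (u s)} ≠ {v : V | v ∉ W ∧ G.Adj v (u t)} := by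
    intro s t hst heq
    obtain ⟨v, hvW, hvt, hvs⟩ := hsep s t hst
    exact hvs (heq ▸ ⟨hvW, hvt⟩ : v ∈ {v : V | v ∉ W ∧ G.Adj v (u s)}).2
  have hdistinct : ∀ s t, s ≠ t →
      {v : V | v ∉ W ∧ G.Adj v (u s)} ≠ {v : V | v ∉ W ∧ G.Adj v (u t)} := by
    intro s t hst
    rcases hst.lt_or_gt with h | h
    exacts [hne s t h, (hne t s h).symm]
  refine ⟨u, fun s t hst => ?_, hu, hdistinct⟩
  by_contra h
  exact hdistinct s t h (by rw [hst])

theorem hasDistinctOutsideNeighbourhoods_of_strictMono {n : ℕ} {x y : Fin n → V}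
    (hxy : ∀ i j, i < j → G.Adj (x j) (y i) ∧ ¬ G.Adj (x i) (y j))
    {c : Fin (2 * k) → Fin n} (hc : StrictMono c) (hx : ∀ j, x (c j) ∈ W)
    (hy : ∀ j, y (c j) ∉ W) : HasDistinctOutsideNeighbourhoods G W k := by
  let even (s : Fin k) : Fin (2 * k) := ⟨2 * s, by omega⟩
  let odd (s : Fin k) : Fin (2 * k) := ⟨2 * s + 1, by omega⟩
  refine hasDistinctOutsideNeighbourhoods_of_separated (fun s => x (c (even s))) (fun s => hx _)
    fun s t hst => ⟨y (c (odd s)), hy _, ?_, ?_⟩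
  · exact (hxy _ _ (hc (show odd s < even t by simp [Fin.lt_def, even, odd]; omega))).1.symm
  · exact fun h => (hxy _ _ (hc (show even s < odd s by simp [Fin.lt_def, even, odd]))).2 h.symm

end

theorem card_filter_univ_comp_of_range_eq {V : Type*} {n : ℕ} {x : Fin n → V}
    (hx : Function.Injective x) {X : Finset V} (hX : Set.range x = X)
    (p : V → Prop) [DecidablePred p] :
    #(univ.filter fun i => p (x i)) = #(X.filter p) := by
  classical
  have : X = univ.image x := coe_injective (by simp [hX])
  rw [this, filter_image, card_image_of_injective _ hx]

namespace GraduallyConnected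

variable {V : Type*} {G : SimpleGraph V} {X Y : Finset V}

theorem symm (h : GraduallyConnected G X Y) : GraduallyConnected G Y X := by
  obtain ⟨hXY, x, y, hx, hy, hxr, hyr, hxy⟩ := h
  let σ : Fin Y.card → Fin X.card := fun i => Fin.rev (finCongr hXY.symm i)
  have hσ : Function.Bijective σ :=
    Fin.rev_bijective.comp (finCongr _).bijective
  refine ⟨hXY.symm, y ∘ σ, x ∘ σ, hy.comp hσ.1, hx.comp hσ.1,
    by rw [hσ.2.range_comp, hyr], by rw [hσ.2.range_comp, hxr], fun i j hij => ?_⟩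
  have := hxy (σ j) (σ i) (by simpa [σ, Fin.rev_lt_rev] using hij)
  exact ⟨this.1.symm, fun h => this.2 h.symm⟩

theorem hasDistinctOutsideNeighbourhoods [DecidableEq V] {W : Finset V} {k : ℕ}
    (h : GraduallyConnected G X Y)
    (hW : #X + 2 * k ≤ #(X.filter (· ∈ W)) + #(Y.filter (· ∉ W))) :
    HasDistinctOutsideNeighbourhoods G W k := by
  obtain ⟨-, x, y, hx, hy, hxr, hyr, hxy⟩ := h
  set A := univ.filter fun i => x i ∈ W
  set B := univ.filter fun i => y i ∉ W
  have hA : #A = #(X.filter (· ∈ W)) := card_filter_univ_comp_of_range_eq hx hxr (· ∈ W)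
  have hB : #B = #(Y.filter (· ∉ W)) := card_filter_univ_comp_of_range_eq hy hyr (· ∉ W)
  have hAB : 2 * k ≤ #(A ∩ B) := by
    have := card_union_add_card_inter A B
    have := card_le_univ (A ∪ B)
    simp only [Fintype.card_fin] at this
    omega
  obtain ⟨C, hCAB, hC⟩ := exists_subset_card_eq hAB
  have hmem (j) : C.orderEmbOfFin hC j ∈ A ∩ B := hCAB (C.orderEmbOfFin_mem hC j)
  exact hasDistinctOutsideNeighbourhoods_of_strictMono hxy (C.orderEmbOfFin hC).strictMono
    (fun j => (mem_filter.mp (mem_inter.mp (hmem j)).1).2)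
    (fun j => (mem_filter.mp (mem_inter.mp (hmem j)).2).2)

end GraduallyConnected

section Partition

variable {ι V : Type*} {s : Finset ι} {P : ι → Finset V}

theorem pairwiseDisjoint_of_existsUnique_mem (hP : ∀ v, ∃! i, i ∈ s ∧ v ∈ P i) :
    (s : Set ι).PairwiseDisjoint P := by
  intro i hi j hj hij
  rw [Function.onFun, disjoint_left]
  exact fun v hvi hvj => hij ((hP v).unique ⟨hi, hvi⟩ ⟨hj, hvj⟩)

theorem sum_card_filter_mem_eq_card [DecidableEq V] (hP : ∀ v, ∃! i, i ∈ s ∧ v ∈ P i)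
    (W : Finset V) : ∑ i ∈ s, #((P i).filter (· ∈ W)) = #W := by
  rw [← card_biUnion ((pairwiseDisjoint_of_existsUnique_mem hP).mono fun i => filter_subset _ _)]
  congr 1
  ext v
  simp only [mem_biUnion, mem_filter]
  refine ⟨fun ⟨_, _, _, hv⟩ => hv, fun hv => ?_⟩
  obtain ⟨i, ⟨hi, hvi⟩, -⟩ := hP v
  exact ⟨i, hi, hvi, hv⟩

end Partition

theorem exists_isTransversal_forall_mem {V : Type*} [DecidableEq V] {Vp : ℕ → Finset V}
    {I : Finset ℕ} (hI : I.Nonempty) (hdisj : (I : Set ℕ).PairwiseDisjoint Vp)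
    (p : V → Prop) [DecidablePred p] (hp : ∀ i ∈ I, ((Vp i).filter p).Nonempty) :
    ∃ X, IsTransversal Vp I X ∧ #X = #I ∧ ∀ v ∈ X, p v := by
  obtain ⟨i₀, hi₀⟩ := hI
  have : Nonempty V := ⟨(hp i₀ hi₀).choose⟩
  choose! g hg using hp
  simp only [mem_filter] at hg
  have hinj : Set.InjOn g I := fun i hi j hj hij =>
    hdisj.elim_finset hi hj (g i) (hg i hi).1 (hij ▸ (hg j hj).1)
  refine ⟨I.image g, ⟨g, fun i hi => (hg i hi).1, hinj, rfl⟩, card_image_of_injOn hinj, ?_⟩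
  simpa using fun i hi => (hg i hi).2

theorem hasDistinctOutsideNeighbourhoods_of_transversals {V : Type*} [DecidableEq V]
    {G : SimpleGraph V} {Vp : ℕ → Finset V} {r k : ℕ} {I : Finset ℕ} {W : Finset V}
    (hpart : ∀ v, ∃! i, i ∈ Icc 1 r ∧ v ∈ Vp i) (hI : I ⊆ Icc 1 (r - 1)) (hk : 1 ≤ k)
    (hIcard : #I = 2 * k)
    (htrans : ∀ X Y, IsTransversal Vp I X → IsTransversal Vp (I.image (· + 1)) Y →
      GraduallyConnected G X Y)
    (hmeet : ∀ i ∈ Icc 1 r, ((Vp i).filter (· ∈ W)).Nonempty ∧ ((Vp i).filter (· ∉ W)).Nonempty) :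
    HasDistinctOutsideNeighbourhoods G W k := by
  have hIr : ∀ i ∈ I, i ∈ Icc 1 r ∧ i + 1 ∈ Icc 1 r := fun i hi => by
    have := mem_Icc.mp (hI hi)
    simp only [mem_Icc]
    omega
  have hIne : I.Nonempty := card_pos.mp (by omega)
  have hdisj := pairwiseDisjoint_of_existsUnique_mem hpart
  obtain ⟨X, hX, hXcard, hXW⟩ := exists_isTransversal_forall_mem hIne
    (hdisj.subset fun i hi => (hIr i hi).1) (· ∈ W) fun i hi => (hmeet i (hIr i hi).1).1
  obtain ⟨Y, hY, hYcard, hYW⟩ := exists_isTransversal_forall_mem (hIne.image (· + 1))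
    (hdisj.subset <| coe_subset.mpr <| image_subset_iff.mpr fun i hi => (hIr i hi).2) (· ∉ W)
    (forall_mem_image.mpr fun i hi => (hmeet _ (hIr i hi).2).2)
  refine (htrans X Y hX hY).hasDistinctOutsideNeighbourhoods ?_
  rw [filter_true_of_mem hXW, filter_true_of_mem hYW, hXcard, hYcard,
    card_image_of_injective _ (add_left_injective 1), hIcard]

theorem gradually_connected_partition_distinct_outside_neighbourhoods_general
    {V : Type*} [DecidableEq V]
    (G : SimpleGraph V) (k r m : ℕ) (hk : 1 ≤ k)
    (Vp : ℕ → Finset V)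
    (hcard : ∀ i ∈ Finset.Icc 1 r, (Vp i).card = m)
    (hpart : ∀ v : V, ∃! i, i ∈ Finset.Icc 1 r ∧ v ∈ Vp i)
    (hm : 6 * k * r < m)
    (hgrad : ∀ i : ℕ, 1 ≤ i → i < r → GraduallyConnected G (Vp i) (Vp (i + 1)))
    (I : Finset ℕ) (hI : I ⊆ Finset.Icc 1 (r - 1)) (hIcard : I.card = 2 * k)
    (htrans : ∀ X Y : Finset V, IsTransversal Vp I X →
      IsTransversal Vp (I.image (· + 1)) Y → GraduallyConnected G X Y)
    (W : Finset V) (hW₁ : r * m ≤ 3 * W.card) (hW₂ : 3 * W.card ≤ 2 * (r * m)) :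
    ∃ u : Fin k → V, Function.Injective u ∧ (∀ s, u s ∈ W) ∧
      ∀ s t : Fin k, s ≠ t →
        {v : V | v ∉ W ∧ G.Adj v (u s)} ≠ {v : V | v ∉ W ∧ G.Adj v (u t)} := by
  set w : ℕ → ℕ := fun i => #((Vp i).filter (· ∈ W))
  have hcompl : ∀ i ∈ Icc 1 r, #((Vp i).filter (· ∉ W)) + w i = m := fun i hi => by
    rw [add_comm, card_filter_add_card_filter_not, hcard i hi]
  by_cases hjump : ∃ i ∈ Ico 1 r, m + 2 * k ≤ w i + #((Vp (i + 1)).filter (· ∉ W)) ∨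
      m + 2 * k ≤ #((Vp i).filter (· ∉ W)) + w (i + 1)
  · obtain ⟨i, hi, hW | hW⟩ := hjump <;> obtain ⟨hi₁, hir⟩ := mem_Ico.mp hi
    · exact (hgrad i hi₁ hir).hasDistinctOutsideNeighbourhoods
        (by rwa [hcard i (Ico_subset_Icc_self hi)])
    · exact (hgrad i hi₁ hir).symm.hasDistinctOutsideNeighbourhoods
        ((hcard (i + 1) (mem_Icc.mpr ⟨by omega, hir⟩)).symm ▸ hW.trans_eq (add_comm _ _))
  push Not at hjump
  have hlevels := forall_pos_lt_of_abs_succ_sub_le (w := w) (d := 2 * k) (fun i hi => by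
      have := hjump i hi
      have := hcompl i (Ico_subset_Icc_self hi)
      have := hcompl (i + 1) (mem_Icc.mpr ⟨by omega, (mem_Ico.mp hi).2⟩)
      rw [abs_le]
      omega)
    (by rwa [sum_card_filter_mem_eq_card hpart]) (by rwa [sum_card_filter_mem_eq_card hpart])
    (by linarith)
  refine hasDistinctOutsideNeighbourhoods_of_transversals hpart hI hk hIcard htrans fun i hi =>
    ⟨card_pos.mp (hlevels i hi).1, card_pos.mp ?_⟩
  have := hcompl i hi
  have := hlevels i hi
  omega

/-- Let the vertex set of `G` be partitioned into `Vp 1, …, Vp r`,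
each of size `m > 6kr`, with `Vp i` gradually connected with `Vp (i+1)`, and suppose
there is `I ⊆ {1, …, r-1}` of size `2k` such that every transversal of
`{Vp i : i ∈ I}` is gradually connected to every transversal of `{Vp (i+1) : i ∈ I}`.
Then every vertex set `W` with `rm/3 ≤ |W| ≤ 2rm/3` contains `k` vertices whose
neighbourhoods outside `W` are pairwise distinct. -/
theorem gradually_connected_partition_distinct_outside_neighbourhoods
    {V : Type*} [Fintype V] [DecidableEq V]
    (G : SimpleGraph V) (k r m : ℕ) (hk : 1 ≤ k)
    (Vp : ℕ → Finset V)
    (hcard : ∀ i ∈ Finset.Icc 1 r, (Vp i).card = m)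
    (hpart : ∀ v : V, ∃! i, i ∈ Finset.Icc 1 r ∧ v ∈ Vp i)
    (hm : 6 * k * r < m)
    (hgrad : ∀ i : ℕ, 1 ≤ i → i < r → GraduallyConnected G (Vp i) (Vp (i + 1)))
    (I : Finset ℕ) (hI : I ⊆ Finset.Icc 1 (r - 1)) (hIcard : I.card = 2 * k)
    (htrans : ∀ X Y : Finset V, IsTransversal Vp I X →
      IsTransversal Vp (I.image (· + 1)) Y → GraduallyConnected G X Y)
    (W : Finset V) (hW₁ : r * m ≤ 3 * W.card) (hW₂ : 3 * W.card ≤ 2 * (r * m)) :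
    ∃ u : Fin k → V, Function.Injective u ∧ (∀ s, u s ∈ W) ∧
      ∀ s t : Fin k, s ≠ t →
        {v : V | v ∉ W ∧ G.Adj v (u s)} ≠ {v : V | v ∉ W ∧ G.Adj v (u t)} :=
  gradually_connected_partition_distinct_outside_neighbourhoods_general G k r m hk Vp hcard hpart hm
    hgrad I hI hIcard htrans W hW₁ hW₂
end

section
/- Let n ≥ 1 and let i, j, l be integers with 1 ≤ i < j ≤ n and 1 ≤ l ≤ n. In the real plane, the closed line segment from (i - 1/2, 0) to (j + 1/2, 1) and the closed line segment from (l, 0) to (l, 1) have a common point if and only if i ≤ l ≤ j. -/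
/-! The vertical segment has constant first coordinate `l`, so the two segments meet exactly when
`l` lies in the projection `[i - 1/2, j + 1/2]` of the slanted one; the same convex weights then
give a common point. For an integer `l` this interval condition is `i ≤ l ≤ j`. -/

open Convex

theorem segment_inter_segment_const_fst_nonempty_iff {𝕜 E F : Type*} [Semiring 𝕜] [PartialOrder 𝕜]
    [AddCommMonoid E] [Module 𝕜 E] [AddCommMonoid F] [Module 𝕜 F] (a b c : E) (y₀ y₁ : F) :
    ([(a, y₀) -[𝕜] (b, y₁)] ∩ [(c, y₀) -[𝕜] (c, y₁)]).Nonempty ↔ c ∈ [a -[𝕜] b] := by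
  constructor
  · rintro ⟨p, hp, μ, ν, -, -, hμν, rfl⟩
    simpa only [Prod.fst_add, Prod.smul_fst, ← add_smul, hμν, one_smul] using
      (Prod.segment_subset _ _ hp).1
  · rintro ⟨μ, ν, hμ, hν, hμν, hc⟩
    refine ⟨μ • (a, y₀) + ν • (b, y₁), ⟨μ, ν, hμ, hν, hμν, rfl⟩, μ, ν, hμ, hν, hμν, ?_⟩
    ext
    · simp only [Prod.fst_add, Prod.smul_fst, ← add_smul, hμν, one_smul, hc]
    · rfl

section IntCast

variable {α : Type*} [Field α] [LinearOrder α] [IsStrictOrderedRing α]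

theorem Int.cast_sub_half_le_cast_iff {m l : ℤ} : (m : α) - 1 / 2 ≤ l ↔ m ≤ l := by
  refine ⟨fun h => ?_, fun h => by linarith [(Int.cast_le (R := α)).2 h]⟩
  by_contra! hlt
  have : (l : α) + 1 ≤ m := by exact_mod_cast hlt
  linarith

theorem Int.cast_le_cast_add_half_iff {m l : ℤ} : (l : α) ≤ m + 1 / 2 ↔ l ≤ m := by
  refine ⟨fun h => ?_, fun h => by linarith [(Int.cast_le (R := α)).2 h]⟩
  by_contra! hlt
  have : (m : α) + 1 ≤ l := by exact_mod_cast hlt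
  linarith

end IntCast

theorem permutation_segment_meets_vertical_iff_general
    (i j l : ℤ)
    (hij : i < j) :
    (segment ℝ (((i : ℝ) - 1 / 2, 0) : ℝ × ℝ) (((j : ℝ) + 1 / 2, 1) : ℝ × ℝ) ∩
      segment ℝ (((l : ℝ), 0) : ℝ × ℝ) (((l : ℝ), 1) : ℝ × ℝ)).Nonempty ↔
    i ≤ l ∧ l ≤ j := by
  have hij' : (i : ℝ) - 1 / 2 ≤ j + 1 / 2 := by linarith [(Int.cast_lt (R := ℝ)).2 hij]
  rw [segment_inter_segment_const_fst_nonempty_iff, segment_eq_Icc hij', Set.mem_Icc,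
    Int.cast_sub_half_le_cast_iff, Int.cast_le_cast_add_half_iff]

/-- For integers `1 ≤ i < j ≤ n` and `1 ≤ l ≤ n`, the closed segment
from `(i - 1/2, 0)` to `(j + 1/2, 1)` and the vertical closed segment from `(l, 0)` to
`(l, 1)` have a common point if and only if `i ≤ l ≤ j`. -/
theorem permutation_segment_meets_vertical_iff
    (n : ℤ) (hn : 1 ≤ n) (i j l : ℤ)
    (hi : 1 ≤ i) (hij : i < j) (hj : j ≤ n) (hl : 1 ≤ l) (hln : l ≤ n) :
    (segment ℝ (((i : ℝ) - 1 / 2, 0) : ℝ × ℝ) (((j : ℝ) + 1 / 2, 1) : ℝ × ℝ) ∩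
      segment ℝ (((l : ℝ), 0) : ℝ × ℝ) (((l : ℝ), 1) : ℝ × ℝ)).Nonempty ↔
    i ≤ l ∧ l ≤ j :=
  permutation_segment_meets_vertical_iff_general i j l hij
end

section
/- Let n ≥ 1 be an integer and δ a real number with 0 < δ and n·δ ≤ 1. Let i, j, l be integers with 1 ≤ i < j ≤ n and 1 ≤ l ≤ n. Consider the axis-parallel unit square B_l = [lδ, lδ + 1] × [(n - l)δ, (n - l)δ + 1] and the axis-parallel unit square N = [X, X + 1] × [Y, Y + 1] with X = 1 + iδ - δ/2 and Y = 1 + (n - j)δ - δ/2, both as subsets of ℝ² (products of closed intervals). Then B_l ∩ N ≠ ∅ if and only if i ≤ l ≤ j. -/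
/-!
Two axis-parallel squares of side `w` meet iff their lower-left corners differ by at most `w`
in each coordinate. For `B_l` and `N` these differences are `(l - i)δ + δ/2 - 1` and
`(j - l)δ + δ/2 - 1`. As `nδ ≤ 1` they never exceed `1`, and the half-step `δ/2` makes them
`≥ -1` exactly when the integers `l - i` and `j - l` are nonnegative.
-/

open Set

section IntervalIntersection

variable {α : Type*} [Field α] [LinearOrder α] [IsStrictOrderedRing α]

theorem Icc_inter_Icc_add_nonempty_iff {a c w : α} :
    (Icc a (a + w) ∩ Icc c (c + w)).Nonempty ↔ |a - c| ≤ w := by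
  rw [Icc_inter_Icc, nonempty_Icc, abs_sub_le_iff]
  simp only [max_le_iff, le_min_iff]
  constructor
  · rintro ⟨⟨-, hac⟩, hca, -⟩
    constructor <;> linarith
  · rintro ⟨hac, hca⟩
    refine ⟨⟨?_, ?_⟩, ?_, ?_⟩ <;> linarith

theorem Icc_prod_Icc_inter_nonempty_iff {a b c d w : α} :
    ((Icc a (a + w) ×ˢ Icc b (b + w)) ∩ (Icc c (c + w) ×ˢ Icc d (d + w))).Nonempty ↔
      |a - c| ≤ w ∧ |b - d| ≤ w := by
  rw [prod_inter_prod, prod_nonempty_iff, Icc_inter_Icc_add_nonempty_iff,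
    Icc_inter_Icc_add_nonempty_iff]

end IntervalIntersection

theorem abs_intCast_mul_add_half_sub_one_le_one_iff {m : ℤ} {δ : ℝ} (hδ : 0 < δ)
    (hm : (m + 1 / 2) * δ ≤ 2) : |m * δ + δ / 2 - 1| ≤ 1 ↔ 0 ≤ m := by
  rw [abs_le]
  constructor
  · rintro ⟨hlower, -⟩
    have hhalf : (0 : ℝ) ≤ m + 1 / 2 :=
      (mul_nonneg_iff_of_pos_right hδ).1 (by linarith)
    have : (-1 : ℤ) < m := by exact_mod_cast (by linarith : (-1 : ℝ) < m)
    omega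
  · intro hm0
    have : (0 : ℝ) ≤ m * δ := mul_nonneg (by exact_mod_cast hm0) hδ.le
    constructor <;> linarith

theorem unitBox_consecutive_neighbourhood_general
    (n : ℤ) (δ : ℝ) (hδ : 0 < δ) (hnδ : (n : ℝ) * δ ≤ 1)
    (i j l : ℤ) (hi : 1 ≤ i) (hj : j ≤ n) (hl : 1 ≤ l) (hln : l ≤ n) :
    ((Set.Icc ((l : ℝ) * δ) ((l : ℝ) * δ + 1) ×ˢ
        Set.Icc (((n : ℝ) - (l : ℝ)) * δ) (((n : ℝ) - (l : ℝ)) * δ + 1)) ∩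
      (Set.Icc (1 + (i : ℝ) * δ - δ / 2) ((1 + (i : ℝ) * δ - δ / 2) + 1) ×ˢ
        Set.Icc (1 + ((n : ℝ) - (j : ℝ)) * δ - δ / 2)
          ((1 + ((n : ℝ) - (j : ℝ)) * δ - δ / 2) + 1))).Nonempty ↔
    i ≤ l ∧ l ≤ j := by
  have offset_le_two {m : ℤ} (hm : m ≤ n - 1) : (m + 1 / 2 : ℝ) * δ ≤ 2 := by
    have : (m : ℝ) + 1 / 2 ≤ n := by
      have : (m : ℝ) ≤ n - 1 := by exact_mod_cast hm
      linarith
    nlinarith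
  have hx : (l : ℝ) * δ - (1 + i * δ - δ / 2) = ((l - i : ℤ) : ℝ) * δ + δ / 2 - 1 := by
    push_cast; ring
  have hy : ((n : ℝ) - l) * δ - (1 + (n - j) * δ - δ / 2) =
      ((j - l : ℤ) : ℝ) * δ + δ / 2 - 1 := by
    push_cast; ring
  rw [Icc_prod_Icc_inter_nonempty_iff, hx, hy,
    abs_intCast_mul_add_half_sub_one_le_one_iff hδ (offset_le_two (by omega)),
    abs_intCast_mul_add_half_sub_one_le_one_iff hδ (offset_le_two (by omega)),
    sub_nonneg, sub_nonneg]

/-- Let `0 < δ` with `n·δ ≤ 1` and let `1 ≤ i < j ≤ n`, `1 ≤ l ≤ n`.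
The axis-parallel unit square `B_l = [lδ, lδ+1] × [(n-l)δ, (n-l)δ+1]` meets the
axis-parallel unit square `N = [X, X+1] × [Y, Y+1]`, where `X = 1 + iδ - δ/2` and
`Y = 1 + (n-j)δ - δ/2`, if and only if `i ≤ l ≤ j`. -/
theorem unitBox_consecutive_neighbourhood
    (n : ℤ) (hn : 1 ≤ n) (δ : ℝ) (hδ : 0 < δ) (hnδ : (n : ℝ) * δ ≤ 1)
    (i j l : ℤ) (hi : 1 ≤ i) (hij : i < j) (hj : j ≤ n) (hl : 1 ≤ l) (hln : l ≤ n) :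
    ((Set.Icc ((l : ℝ) * δ) ((l : ℝ) * δ + 1) ×ˢ
        Set.Icc (((n : ℝ) - (l : ℝ)) * δ) (((n : ℝ) - (l : ℝ)) * δ + 1)) ∩
      (Set.Icc (1 + (i : ℝ) * δ - δ / 2) ((1 + (i : ℝ) * δ - δ / 2) + 1) ×ˢ
        Set.Icc (1 + ((n : ℝ) - (j : ℝ)) * δ - δ / 2)
          ((1 + ((n : ℝ) - (j : ℝ)) * δ - δ / 2) + 1))).Nonempty ↔
    i ≤ l ∧ l ≤ j :=
  unitBox_consecutive_neighbourhood_general n δ hδ hnδ i j l hi hj hl hln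
end

section
/- Let n ≥ 1 be an integer and δ a real number with 0 < δ and (n + 1)δ < π. Let i, j, l be integers with 1 ≤ i < j ≤ n and 1 ≤ l ≤ n. Then the closed interval [lδ, π + lδ] is disjoint from the set [0, iδ - δ/2] ∪ [π + jδ + δ/2, 2π) if and only if i ≤ l ≤ j. -/
/-! Since `(n + 1)δ < π`, the arc `[lδ, π + lδ]` lies inside `[0, 2π)`, so it misses
`[0, iδ - δ/2]` iff its left end exceeds `iδ - δ/2`, and misses `[π + jδ + δ/2, 2π)` iff its
right end is below `π + jδ + δ/2`. Offsetting by half a step turns both strict real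
inequalities into the integer inequalities `i ≤ l` and `l ≤ j`. -/

open Real

namespace Set

variable {α : Type*} [LinearOrder α] {a b c d : α}

theorem Icc_disjoint_Icc_iff_lt (hca : c ≤ a) (hab : a ≤ b) :
    Disjoint (Icc a b) (Icc c d) ↔ d < a := by
  refine ⟨fun h => ?_, fun hda => disjoint_left.2 fun x hx hx' => (hx'.2.trans_lt hda).not_ge hx.1⟩
  by_contra! had
  exact disjoint_left.1 h (left_mem_Icc.2 hab) ⟨hca, had⟩

theorem Icc_disjoint_Ico_iff_lt (hab : a ≤ b) (hbd : b < d) :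
    Disjoint (Icc a b) (Ico c d) ↔ b < c := by
  refine ⟨fun h => ?_, fun hbc => disjoint_left.2 fun x hx hx' => (hx.2.trans_lt hbc).not_ge hx'.1⟩
  by_contra! hcb
  have hmax : max a c ≤ b := max_le hab hcb
  exact disjoint_left.1 h ⟨le_max_left a c, hmax⟩ ⟨le_max_right a c, hmax.trans_lt hbd⟩

end Set

theorem intCast_mul_lt_intCast_mul_add_half_iff {K : Type*} [Field K] [LinearOrder K]
    [IsStrictOrderedRing K] {δ : K} (hδ : 0 < δ) {a b : ℤ} :
    (a : K) * δ < b * δ + δ / 2 ↔ a ≤ b := by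
  constructor
  · intro h
    have : (a : K) < b + 1 := lt_of_mul_lt_mul_right (by linarith) hδ.le
    exact Int.lt_add_one_iff.1 (by exact_mod_cast this)
  · intro h
    have : (a : K) * δ ≤ b * δ := mul_le_mul_of_nonneg_right (by exact_mod_cast h) hδ.le
    linarith

theorem circularArc_complement_consecutive_neighbourhood_general
    (n : ℤ) (δ : ℝ) (hδ : 0 < δ) (hnδ : ((n : ℝ) + 1) * δ < π)
    (i j l : ℤ) (hl : 1 ≤ l) (hln : l ≤ n) :
    Set.Icc ((l : ℝ) * δ) (π + (l : ℝ) * δ) ∩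
      (Set.Icc 0 ((i : ℝ) * δ - δ / 2) ∪
        Set.Ico (π + (j : ℝ) * δ + δ / 2) (2 * π)) = ∅ ↔
    i ≤ l ∧ l ≤ j := by
  have hlδ_nonneg : 0 ≤ (l : ℝ) * δ := by positivity
  have hlδ_lt_pi : (l : ℝ) * δ < π := by
    have : (l : ℝ) * δ ≤ n * δ := mul_le_mul_of_nonneg_right (by exact_mod_cast hln) hδ.le
    linarith
  rw [← Set.disjoint_iff_inter_eq_empty, Set.disjoint_union_right,
    Set.Icc_disjoint_Icc_iff_lt hlδ_nonneg (by linarith [pi_pos]),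
    Set.Icc_disjoint_Ico_iff_lt (by linarith [pi_pos]) (by linarith), sub_lt_iff_lt_add,
    intCast_mul_lt_intCast_mul_add_half_iff hδ, add_assoc, add_lt_add_iff_left,
    intCast_mul_lt_intCast_mul_add_half_iff hδ]

/-- Let `0 < δ` with `(n+1)·δ < π`, and let `1 ≤ i < j ≤ n`,
`1 ≤ l ≤ n`. The arc `s_l = [lδ, π + lδ]` is disjoint from the arc through `0`
`n_{i,j} = [0, iδ - δ/2] ∪ [π + jδ + δ/2, 2π)` if and only if `i ≤ l ≤ j`. -/
theorem circularArc_complement_consecutive_neighbourhood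
    (n : ℤ) (hn : 1 ≤ n) (δ : ℝ) (hδ : 0 < δ) (hnδ : ((n : ℝ) + 1) * δ < π)
    (i j l : ℤ) (hi : 1 ≤ i) (hij : i < j) (hj : j ≤ n) (hl : 1 ≤ l) (hln : l ≤ n) :
    Set.Icc ((l : ℝ) * δ) (π + (l : ℝ) * δ) ∩
      (Set.Icc 0 ((i : ℝ) * δ - δ / 2) ∪
        Set.Ico (π + (j : ℝ) * δ + δ / 2) (2 * π)) = ∅ ↔
    i ≤ l ∧ l ≤ j :=
  circularArc_complement_consecutive_neighbourhood_general n δ hδ hnδ i j l hl hln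
end

section
/- Let m ≥ 1 be an integer and let ε, δ be real numbers with 0 < ε, m·ε ≤ 1, and 0 < δ < 1. For integers 1 ≤ i, j ≤ m, consider the axis-parallel unit squares S_i = [iε, iε + 1] × [iε, iε + 1] and T_j = [1 + jε, 2 + jε] × [δ + jε, 1 + δ + jε] as subsets of ℝ² (products of closed intervals). Then S_i ∩ T_j ≠ ∅ if and only if j ≤ i. -/
open Set

section IntervalsOfEqualLength

variable {α : Type*} [AddCommGroup α] [LinearOrder α] [IsOrderedAddMonoid α] {a b c d r : α}

theorem Icc_add_inter_Icc_add_nonempty_iff (hr : 0 ≤ r) :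
    (Icc a (a + r) ∩ Icc b (b + r)).Nonempty ↔ |a - b| ≤ r := by
  rw [Icc_inter_Icc, nonempty_Icc, max_le_iff, le_min_iff, le_min_iff, abs_sub_le_iff,
    sub_le_iff_le_add, sub_le_iff_le_add, add_comm r, add_comm r]
  exact ⟨fun ⟨⟨_, hab⟩, hba, _⟩ => ⟨hab, hba⟩,
    fun ⟨hab, hba⟩ => ⟨⟨le_add_of_nonneg_right hr, hab⟩, hba, le_add_of_nonneg_right hr⟩⟩

theorem Icc_add_prod_Icc_add_inter_nonempty_iff (hr : 0 ≤ r) :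
    ((Icc a (a + r) ×ˢ Icc b (b + r)) ∩ (Icc c (c + r) ×ˢ Icc d (d + r))).Nonempty ↔
      |a - c| ≤ r ∧ |b - d| ≤ r := by
  rw [prod_inter_prod, prod_nonempty_iff, Icc_add_inter_Icc_add_nonempty_iff hr,
    Icc_add_inter_Icc_add_nonempty_iff hr]

end IntervalsOfEqualLength

theorem unitBox_gradual_connectivity_general
    (m : ℤ) (ε δ : ℝ) (hε : 0 < ε) (hmε : (m : ℝ) * ε ≤ 1)
    (hδ₀ : 0 < δ) (hδ₁ : δ < 1)
    (i j : ℤ) (him : i ≤ m) (hj : 1 ≤ j) :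
    ((Set.Icc ((i : ℝ) * ε) ((i : ℝ) * ε + 1) ×ˢ
        Set.Icc ((i : ℝ) * ε) ((i : ℝ) * ε + 1)) ∩
      (Set.Icc (1 + (j : ℝ) * ε) (2 + (j : ℝ) * ε) ×ˢ
        Set.Icc (δ + (j : ℝ) * ε) (1 + δ + (j : ℝ) * ε))).Nonempty ↔
    j ≤ i := by
  have hiε : (i : ℝ) * ε ≤ 1 :=
    (mul_le_mul_of_nonneg_right (by exact_mod_cast him) hε.le).trans hmε
  have hjε : 0 < (j : ℝ) * ε := mul_pos (by exact_mod_cast hj) hε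
  have hji : j ≤ i ↔ (j : ℝ) * ε ≤ i * ε := by
    rw [mul_le_mul_iff_of_pos_right hε, Int.cast_le]
  rw [show (2 : ℝ) + j * ε = 1 + j * ε + 1 by ring,
    show 1 + δ + (j : ℝ) * ε = δ + j * ε + 1 by ring, Icc_add_prod_Icc_add_inter_nonempty_iff zero_le_one, abs_le, abs_le, hji]
  -- Horizontally the squares meet iff `0 ≤ (i - j) ε ≤ 2`; the vertical condition
  -- `|(i - j) ε - δ| ≤ 1` then holds automatically, as `0 < δ < 1` and `(i - j) ε < i ε ≤ 1`.
  constructor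
  · rintro ⟨⟨_, hx⟩, -⟩
    linarith
  · intro h
    refine ⟨⟨?_, ?_⟩, ?_, ?_⟩ <;> linarith

/-- Let `0 < ε` with `m·ε ≤ 1` and `0 < δ < 1`, and let
`1 ≤ i, j ≤ m`. The axis-parallel unit square `S_i = [iε, iε+1] × [iε, iε+1]` meets the
axis-parallel unit square `T_j = [1+jε, 2+jε] × [δ+jε, 1+δ+jε]` if and only if
`j ≤ i`. -/
theorem unitBox_gradual_connectivity
    (m : ℤ) (hm : 1 ≤ m) (ε δ : ℝ) (hε : 0 < ε) (hmε : (m : ℝ) * ε ≤ 1)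
    (hδ₀ : 0 < δ) (hδ₁ : δ < 1)
    (i j : ℤ) (hi : 1 ≤ i) (him : i ≤ m) (hj : 1 ≤ j) (hjm : j ≤ m) :
    ((Set.Icc ((i : ℝ) * ε) ((i : ℝ) * ε + 1) ×ˢ
        Set.Icc ((i : ℝ) * ε) ((i : ℝ) * ε + 1)) ∩
      (Set.Icc (1 + (j : ℝ) * ε) (2 + (j : ℝ) * ε) ×ˢ
        Set.Icc (δ + (j : ℝ) * ε) (1 + δ + (j : ℝ) * ε))).Nonempty ↔
    j ≤ i :=
  unitBox_gradual_connectivity_general m ε δ hε hmε hδ₀ hδ₁ i j him hj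
end
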